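/- Let X be a reflexive Banach space, k = l + m, P a cut of {1,...,k} of size l, Ū a sequence of k free ultrafilters, s and t normalized rooted trees of heights l and m that are Ū_P- and Ū_{P^c}-weakly null respectively, and a₀,...,a_l, b₀,...,b_m ≥ 0. Define f(n₁,...,n_l) = a₀ s(∅) + Σ_{i=1}^l a_i s(n₁,...,n_i) and g(n₁,...,n_m) = b₀ t(∅) + Σ_{j=1}^m b_j t(n₁,...,n_j). Then ‖a₀ s(∅) + b₀ t(∅)‖ + N_s^{Ū_P}(Σ_{i=1}^l a_i e_i) + N_t^{Ū_{P^c}}(Σ_{j=1}^m b_j e_j) ≤ 5 · lim_{n̄,Ū} ‖f(n_i : i∈P) + g(n_i : i∈P^c)‖, and lim_{n̄,Ū} ‖f(n_i : i∈P) + g(n_i : i∈P^c)‖ ≤ ‖a₀ s(∅) + b₀ t(∅)‖ + N_s^{Ū_P}(Σ a_i e_i) + N_t^{Ū_{P^c}}(Σ b_j e_j). -/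

import Mathlib

open Filter Topology
open scoped ZeroAtInfty ENNReal NNReal

/-- Increasing `k`-tuples of naturals: the vertices `[ℕ]^k` of the interlacing graph. -/
def IncTuple (k : ℕ) := {f : Fin k → ℕ // StrictMono f}

/-- `m₁ ≤ n₁ ≤ m₂ ≤ n₂ ≤ ⋯ ≤ m_k ≤ n_k`. -/
def InterLE {k : ℕ} (m n : Fin k → ℕ) : Prop :=
  (∀ i, m i ≤ n i) ∧ ∀ (i : ℕ) (h : i + 1 < k), n ⟨i, Nat.lt_of_succ_lt h⟩ ≤ m ⟨i + 1, h⟩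

/-- The pair `(m, n)` interlaces. -/
def Interlacing {k : ℕ} (m n : Fin k → ℕ) : Prop := InterLE m n ∨ InterLE n m

/-- `m₁ ≤ n₁ < m₂ ≤ n₂ < ⋯ < m_k ≤ n_k`. -/
def StrongInterLE {k : ℕ} (m n : Fin k → ℕ) : Prop :=
  (∀ i, m i ≤ n i) ∧ ∀ (i : ℕ) (h : i + 1 < k), n ⟨i, Nat.lt_of_succ_lt h⟩ < m ⟨i + 1, h⟩

/-- The pair `(m, n)` is strongly interlacing. -/
def StronglyInterlacing {k : ℕ} (m n : Fin k → ℕ) : Prop :=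
  StrongInterLE m n ∨ StrongInterLE n m

/-- The interlacing graph on `[ℕ]^k`. -/
def interGraph (k : ℕ) : SimpleGraph (IncTuple k) where
  Adj m n := m ≠ n ∧ Interlacing m.1 n.1
  symm := ⟨fun _ _ h => ⟨h.1.symm, h.2.symm⟩⟩
  loopless := ⟨fun _ h => h.1 rfl⟩

/-- The interlacing graph metric `d_I`. -/
noncomputable def dI {k : ℕ} (m n : IncTuple k) : ℕ := (interGraph k).dist m n

/-- All entries of the tuple belong to `L`. -/
def memAll {k : ℕ} (L : Set ℕ) (m : IncTuple k) : Prop := ∀ i, m.1 i ∈ L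

/-- `m̄ < n̄`: every entry of `m` is below every entry of `n`. -/
def ordLT {k : ℕ} (m n : IncTuple k) : Prop := ∀ i j, m.1 i < n.1 j

/-- Kalton's `Q(ε, δ)`-property of a metric space. -/
def HasQProp (M : Type*) [MetricSpace M] (ε δ : ℝ) : Prop :=
  ∀ (k : ℕ) (f : IncTuple k → M),
    (∀ m n : IncTuple k, dist (f m) (f n) ≤ δ * dI m n) →
    ∃ L : Set ℕ, L.Infinite ∧ ∀ m n : IncTuple k, memAll L m → memAll L n → ordLT m n →
      dist (f m) (f n) < ε

/-- The modulus `Δ_M(ε)`. -/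
noncomputable def DeltaMod (M : Type*) [MetricSpace M] (ε : ℝ) : ℝ :=
  sSup {δ : ℝ | 0 ≤ δ ∧ HasQProp M ε δ}

/-- The constant `q_M`. -/
noncomputable def qMod (M : Type*) [MetricSpace M] : ℝ :=
  sSup {c : ℝ | 0 ≤ c ∧ ∀ ε : ℝ, 0 < ε → c * ε ≤ DeltaMod M ε}

/-- Boundedness of a map into a metric space. -/
def IsBddMap {α : Type*} {M : Type*} [MetricSpace M] (f : α → M) : Prop :=
  ∃ R : ℝ, ∀ x y, dist (f x) (f y) ≤ R

/-- Property `Q` with constant `C`: every Lipschitz map on an interlacing graph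
concentrates on `[L]^k` up to `C·Lip(f)`. -/
def HasPropQConst (M : Type*) [MetricSpace M] (C : ℝ) : Prop :=
  ∀ (k : ℕ) (f : IncTuple k → M) (K : ℝ), 0 ≤ K →
    (∀ m n : IncTuple k, dist (f m) (f n) ≤ K * dI m n) →
    ∃ L : Set ℕ, L.Infinite ∧ ∀ m n : IncTuple k, memAll L m → memAll L n →
      dist (f m) (f n) ≤ C * K

/-- Property `Q`. -/
def HasPropQ (M : Type*) [MetricSpace M] : Prop := ∃ C : ℝ, 0 ≤ C ∧ HasPropQConst M C

/-- The property `Q` constant `Q_M`. -/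
noncomputable def QConst (M : Type*) [MetricSpace M] : ℝ :=
  sInf {C : ℝ | 0 ≤ C ∧ HasPropQConst M C}

theorem compl_card {l m : ℕ} (P : Finset (Fin (l + m))) (hP : P.card = l) : Pᶜ.card = m := by
  rw [Finset.card_compl, hP, Fintype.card_fin]; omega

/-- The increasing subtuple `(n_i : i ∈ P)`. -/
def subTuple {k j : ℕ} (n : Fin k → ℕ) (P : Finset (Fin k)) (h : P.card = j) :
    Fin j → ℕ := fun i => n (P.orderEmbOfFin h i)

/-- The set of distances `d_M(f(n_i : i ∈ P), g(n_i : i ∈ P^c))` over `n̄ ∈ [L]^{l+m}`. -/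
def cutDistSet {l m : ℕ} {M : Type*} [MetricSpace M]
    (f : (Fin l → ℕ) → M) (g : (Fin m → ℕ) → M) (L : Set ℕ)
    (P : Finset (Fin (l + m))) (hP : P.card = l) : Set ℝ :=
  {d : ℝ | ∃ n : Fin (l + m) → ℕ, StrictMono n ∧ (∀ i, n i ∈ L) ∧
    d = dist (f (subTuple n P hP)) (g (subTuple n Pᶜ (compl_card P hP)))}

/-- `C`-cut stability. -/
def CutStableWith (M : Type*) [MetricSpace M] (C : ℝ) : Prop :=
  ∀ (l m : ℕ) (f : (Fin l → ℕ) → M) (g : (Fin m → ℕ) → M),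
    IsBddMap f → IsBddMap g → ∀ L : Set ℕ, L.Infinite →
    ∀ (P Q : Finset (Fin (l + m))) (hP : P.card = l) (hQ : Q.card = l),
      sInf (cutDistSet f g L P hP) ≤ C * sSup (cutDistSet f g L Q hQ)

/-- A permutation of `{1,…,l+m}` preserving the order on `{1,…,l}` and on `{l+1,…,l+m}`. -/
def OrderPreservingPerm {l m : ℕ} (π : Equiv.Perm (Fin (l + m))) : Prop :=
  StrictMono (fun i : Fin l => π (Fin.castAdd m i)) ∧
  StrictMono (fun j : Fin m => π (Fin.natAdd l j))

/-- Distances `d_M(f(n_{π(1)},…,n_{π(l)}), g(n_{π(l+1)},…,n_{π(l+m)}))` over `n̄ ∈ [L]^{l+m}`. -/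
def permDistSet {l m : ℕ} {M : Type*} [MetricSpace M]
    (f : (Fin l → ℕ) → M) (g : (Fin m → ℕ) → M) (L : Set ℕ)
    (π : Equiv.Perm (Fin (l + m))) : Set ℝ :=
  {d : ℝ | ∃ n : Fin (l + m) → ℕ, StrictMono n ∧ (∀ i, n i ∈ L) ∧
    d = dist (f (fun i => n (π (Fin.castAdd m i)))) (g (fun j => n (π (Fin.natAdd l j))))}

/-- `C`-upper stability. -/
def UpperStableWith (M : Type*) [MetricSpace M] (C : ℝ) : Prop :=
  ∀ (l m : ℕ) (f : (Fin l → ℕ) → M) (g : (Fin m → ℕ) → M),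
    IsBddMap f → IsBddMap g → ∀ L : Set ℕ, L.Infinite →
    ∀ π : Equiv.Perm (Fin (l + m)), OrderPreservingPerm π →
      sInf (permDistSet f g L (Equiv.refl _)) ≤ C * sSup (permDistSet f g L π)

/-- The modulus of continuity `ω_h`. -/
noncomputable def omegaMod {M N : Type*} [MetricSpace M] [MetricSpace N] (h : M → N)
    (t : ℝ) : ℝ≥0∞ :=
  ⨆ p : {p : M × M // dist p.1 p.2 ≤ t}, edist (h p.1.1) (h p.1.2)

/-- The compression modulus `ρ_h`. -/
noncomputable def rhoMod {M N : Type*} [MetricSpace M] [MetricSpace N] (h : M → N)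
    (t : ℝ) : ℝ≥0∞ :=
  ⨅ p : {p : M × M // t ≤ dist p.1 p.2}, edist (h p.1.1) (h p.1.2)

/-- A coarse embedding, expressed via the moduli. -/
def CoarseEmbMod {M N : Type*} [MetricSpace M] [MetricSpace N] (h : M → N) : Prop :=
  (∀ t : ℝ, omegaMod h t < ⊤) ∧ Tendsto (rhoMod h) atTop (𝓝 ⊤)

/-- A uniform embedding, expressed via the moduli. -/
def UniformEmbMod {M N : Type*} [MetricSpace M] [MetricSpace N] (h : M → N) : Prop :=
  Tendsto (omegaMod h) (𝓝[>] (0 : ℝ)) (𝓝 0) ∧ ∀ t : ℝ, 0 < t → 0 < rhoMod h t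

/-- A free ultrafilter on `ℕ`. -/
def FreeUF (U : Ultrafilter ℕ) : Prop := (U : Filter ℕ) ≤ Filter.cofinite

/-- The iterated ultrafilter limit `lim_{n₁,U₁} ⋯ lim_{n_k,U_k} F(n₁,…,n_k)`. -/
noncomputable def ultraLim : (k : ℕ) → (Fin k → Ultrafilter ℕ) → ((Fin k → ℕ) → ℝ) → ℝ
  | 0, _, F => F (fun i => i.elim0)
  | k + 1, U, F => ultraLim k (fun i => U i.castSucc)
      (fun n => limUnder (U (Fin.last k)) (fun j => F (Fin.snoc n j)))

/-- An unrooted (countably branching) tree of height `k` in `X`. -/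
def TreeU (X : Type*) (k : ℕ) := (i : Fin k) → (Fin (i.1 + 1) → ℕ) → X

/-- A rooted (countably branching) tree of height `k` in `X`. -/
def TreeR (X : Type*) (k : ℕ) := (i : Fin (k + 1)) → (Fin i.1 → ℕ) → X

/-- A normalized unrooted tree takes values in the unit sphere. -/
def NormalizedU {X : Type*} [NormedAddCommGroup X] {k : ℕ} (t : TreeU X k) : Prop :=
  ∀ i v, ‖t i v‖ = 1

/-- A normalized rooted tree takes values in the unit sphere. -/
def NormalizedR {X : Type*} [NormedAddCommGroup X] {k : ℕ} (t : TreeR X k) : Prop :=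
  ∀ i v, ‖t i v‖ = 1

/-- `∀_{U₁} n₁ ⋯ ∀_{U_j} n_j, P(n₁,…,n_j)`. -/
def iterEventually : (j : ℕ) → (Fin j → Ultrafilter ℕ) → ((Fin j → ℕ) → Prop) → Prop
  | 0, _, P => P (fun i => i.elim0)
  | j + 1, U, P => iterEventually j (fun i => U i.castSucc)
      (fun n => ∀ᶠ a in U (Fin.last j), P (Fin.snoc n a))

/-- An unrooted tree is `Ū`-weakly null. -/
def WeaklyNullU {X : Type*} [NormedAddCommGroup X] [NormedSpace ℝ X] {k : ℕ}
    (U : Fin k → Ultrafilter ℕ) (t : TreeU X k) : Prop :=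
  ∀ i : Fin k, iterEventually i.1 (fun j => U (Fin.castLE i.isLt.le j))
    (fun pre => ∀ φ : X →L[ℝ] ℝ,
      Tendsto (fun a : ℕ => φ (t i (Fin.snoc pre a))) (U i) (𝓝 0))

/-- A rooted tree is `Ū`-weakly null. -/
def WeaklyNullR {X : Type*} [NormedAddCommGroup X] [NormedSpace ℝ X] {k : ℕ}
    (U : Fin k → Ultrafilter ℕ) (t : TreeR X k) : Prop :=
  ∀ i : Fin k, iterEventually i.1 (fun j => U (Fin.castLE i.isLt.le j))
    (fun pre => ∀ φ : X →L[ℝ] ℝ,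
      Tendsto (fun a : ℕ => φ (t i.succ (Fin.snoc pre a))) (U i) (𝓝 0))

/-- The norm `N_t^{Ū}(x ⊕ Σ aᵢ eᵢ)`. -/
noncomputable def treeNorm {X : Type*} [NormedAddCommGroup X] [NormedSpace ℝ X] {k : ℕ}
    (U : Fin k → Ultrafilter ℕ) (t : TreeU X k) (x : X) (a : Fin k → ℝ) : ℝ :=
  ultraLim k U (fun n => ‖x + ∑ i : Fin k, a i • t i (fun j => n (Fin.castLE i.isLt j))‖)

/-- The number of elements of `P` that are `≤ j`. -/
def rankIn {k : ℕ} (P : Finset (Fin k)) (j : Fin k) : ℕ :=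
  (P.filter (fun i => i ≤ j)).card

/-- The `P`-intertwining `s ⊛_P t` of two trees. -/
def intertwine {X : Type*} {l m : ℕ} (P : Finset (Fin (l + m))) (hP : P.card = l)
    (s : TreeU X l) (t : TreeU X m) : TreeU X (l + m) := fun j v =>
  let v' : Fin (l + m) → ℕ := fun p => if h : p.1 < j.1 + 1 then v ⟨p.1, h⟩ else 0
  if hj : j ∈ P then
    s ⟨rankIn P j - 1, by
        have h1 : 0 < rankIn P j :=
          Finset.card_pos.mpr ⟨j, Finset.mem_filter.mpr ⟨hj, le_refl j⟩⟩
        have h2 : rankIn P j ≤ l := (Finset.card_filter_le P _).trans hP.le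
        omega⟩
      (fun b => v' (P.orderEmbOfFin hP ⟨b.1, by
        have h1 : 0 < rankIn P j :=
          Finset.card_pos.mpr ⟨j, Finset.mem_filter.mpr ⟨hj, le_refl j⟩⟩
        have h2 : rankIn P j ≤ l := (Finset.card_filter_le P _).trans hP.le
        have h3 := b.isLt
        omega⟩))
  else
    t ⟨rankIn Pᶜ j - 1, by
        have h1 : 0 < rankIn Pᶜ j :=
          Finset.card_pos.mpr ⟨j, Finset.mem_filter.mpr ⟨Finset.mem_compl.mpr hj, le_refl j⟩⟩
        have h2 : rankIn Pᶜ j ≤ m := (Finset.card_filter_le Pᶜ _).trans (compl_card P hP).le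
        omega⟩
      (fun b => v' (Pᶜ.orderEmbOfFin (compl_card P hP) ⟨b.1, by
        have h1 : 0 < rankIn Pᶜ j :=
          Finset.card_pos.mpr ⟨j, Finset.mem_filter.mpr ⟨Finset.mem_compl.mpr hj, le_refl j⟩⟩
        have h2 : rankIn Pᶜ j ≤ m := (Finset.card_filter_le Pᶜ _).trans (compl_card P hP).le
        have h3 := b.isLt
        omega⟩))

/-- The unrooted part of a rooted tree. -/
def unroot {X : Type*} {k : ℕ} (t : TreeR X k) : TreeU X k := fun i v => t i.succ v

/-- The summing basis of `c₀`. -/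
noncomputable def summingBasis (n : ℕ) : C₀(ℕ, ℝ) :=
  ⟨⟨fun x => if x ≤ n then 1 else 0, continuous_of_discreteTopology⟩, by
    rw [cocompact_eq_cofinite, Nat.cofinite_eq_atTop]
    refine (tendsto_congr' ?_).mpr tendsto_const_nhds
    filter_upwards [eventually_gt_atTop n] with x hx
    simp [if_neg (not_le.mpr hx)]⟩

/-- The canonical map `[ℕ]^k → c₀`, `n̄ ↦ Σᵢ s_{nᵢ}`. -/
noncomputable def interMap {k : ℕ} (m : Fin k → ℕ) : C₀(ℕ, ℝ) :=
  ∑ i : Fin k, summingBasis (m i)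

/-- Krivine–Maurey stability of a metric space. -/
def StableSpace (M : Type*) [MetricSpace M] : Prop :=
  ∀ U V : Ultrafilter ℕ, FreeUF U → FreeUF V →
    ∀ x y : ℕ → M, Bornology.IsBounded (Set.range x) → Bornology.IsBounded (Set.range y) →
      limUnder (U : Filter ℕ) (fun a => limUnder (V : Filter ℕ) (fun b => dist (x a) (y b)))
        = limUnder (V : Filter ℕ) (fun b => limUnder (U : Filter ℕ) (fun a => dist (x a) (y b)))

/-!
The upper bound is the triangle inequality. For the lower bound, the key fact is that
interleaving a weakly null tree `t` into the branches of a tree `s` does not decrease the tree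
norm of `s`. Peel off the first level: a level of `s` is handled by induction below each node,
while a level of `t` is a weakly null sequence, which the function `y ↦ N_s(x + y)` cannot
detect, since it is convex and continuous, hence weakly lower semicontinuous.
Applied to the pairs `(s, t)`, `(t, s)` and `(∅, s)`, this bounds `N_s(x)`, `N_t(x)` and `‖x‖`
by the limit `L`; then `N_s(0) ≤ N_s(x) + ‖x‖ ≤ 2L`, likewise for `t`, and the sum is at most
`5L`.
-/

section UltraLim

lemma tendsto_limUnder_of_abs_le {α : Type*} (U : Ultrafilter α) {f : α → ℝ} {R : ℝ}
    (hf : ∀ n, |f n| ≤ R) : Tendsto f U (𝓝 (limUnder (U : Filter α) f)) := by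
  have hle : (U.map f : Filter ℝ) ≤ 𝓟 (Set.Icc (-R) R) :=
    le_principal_iff.2 (mem_map.2 (Eventually.of_forall fun n => abs_le.1 (hf n)))
  obtain ⟨x, -, hx⟩ := isCompact_Icc.ultrafilter_le_nhds (U.map f) hle
  exact (tendsto_nhds_limUnder ⟨x, hx⟩)

lemma abs_limUnder_le {α : Type*} (U : Ultrafilter α) {f : α → ℝ} {R : ℝ}
    (hf : ∀ n, |f n| ≤ R) : |limUnder (U : Filter α) f| ≤ R :=
  abs_le.2 <| isClosed_Icc.mem_of_tendsto (tendsto_limUnder_of_abs_le U hf)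
    (Eventually.of_forall fun n => abs_le.1 (hf n))

lemma limUnder_mono {α : Type*} (U : Ultrafilter α) {f g : α → ℝ} {R R' : ℝ}
    (hf : ∀ n, |f n| ≤ R) (hg : ∀ n, |g n| ≤ R') (h : ∀ᶠ n in (U : Filter α), f n ≤ g n) :
    limUnder (U : Filter α) f ≤ limUnder (U : Filter α) g :=
  le_of_tendsto_of_tendsto (tendsto_limUnder_of_abs_le U hf) (tendsto_limUnder_of_abs_le U hg) h

lemma abs_ultraLim_le : ∀ {k : ℕ} (U : Fin k → Ultrafilter ℕ) {F : (Fin k → ℕ) → ℝ} {R : ℝ},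
    (∀ n, |F n| ≤ R) → |ultraLim k U F| ≤ R
  | 0, _, _, _, h => h _
  | k + 1, U, F, _, h => abs_ultraLim_le (k := k) _
      (F := fun n => limUnder (U (Fin.last k) : Filter ℕ) fun j => F (Fin.snoc n j))
      fun _ => abs_limUnder_le _ fun _ => h _

lemma ultraLim_mono : ∀ {k : ℕ} (U : Fin k → Ultrafilter ℕ) {F G : (Fin k → ℕ) → ℝ} {R R' : ℝ},
    (∀ n, |F n| ≤ R) → (∀ n, |G n| ≤ R') → (∀ n, F n ≤ G n) → ultraLim k U F ≤ ultraLim k U G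
  | 0, _, _, _, _, _, _, _, h => h _
  | k + 1, U, F, G, _, _, hF, hG, h =>
    ultraLim_mono (k := k) _
      (F := fun n => limUnder (U (Fin.last k) : Filter ℕ) fun j => F (Fin.snoc n j))
      (G := fun n => limUnder (U (Fin.last k) : Filter ℕ) fun j => G (Fin.snoc n j))
      (fun _ => abs_limUnder_le _ fun _ => hF _)
      (fun _ => abs_limUnder_le _ fun _ => hG _)
      fun _ => limUnder_mono _ (fun _ => hF _) (fun _ => hG _) (Eventually.of_forall fun _ => h _)

lemma ultraLim_add : ∀ {k : ℕ} (U : Fin k → Ultrafilter ℕ) {F G : (Fin k → ℕ) → ℝ} {R R' : ℝ},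
    (∀ n, |F n| ≤ R) → (∀ n, |G n| ≤ R') →
    ultraLim k U (fun n => F n + G n) = ultraLim k U F + ultraLim k U G
  | 0, _, _, _, _, _, _, _ => rfl
  | _ + 1, _, _, _, _, _, hF, hG => by
    simp only [ultraLim]
    rw [← ultraLim_add _ (fun _ => abs_limUnder_le _ fun _ => hF _)
      (fun _ => abs_limUnder_le _ fun _ => hG _)]
    congr 1
    funext n
    exact ((tendsto_limUnder_of_abs_le _ fun _ => hF _).add
      (tendsto_limUnder_of_abs_le _ fun _ => hG _)).limUnder_eq

lemma ultraLim_const : ∀ {k : ℕ} (U : Fin k → Ultrafilter ℕ) (c : ℝ),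
    ultraLim k U (fun _ => c) = c
  | 0, _, _ => rfl
  | _ + 1, _, c => by
    simp only [ultraLim, tendsto_const_nhds.limUnder_eq]
    exact ultraLim_const _ c

lemma ultraLim_const_mul : ∀ {k : ℕ} (U : Fin k → Ultrafilter ℕ) {F : (Fin k → ℕ) → ℝ} {R : ℝ},
    (∀ n, |F n| ≤ R) → ∀ c : ℝ, ultraLim k U (fun n => c * F n) = c * ultraLim k U F
  | 0, _, _, _, _, _ => rfl
  | _ + 1, _, _, _, hF, c => by
    simp only [ultraLim]
    rw [← ultraLim_const_mul _ (fun _ => abs_limUnder_le _ fun _ => hF _) c]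
    congr 1
    funext n
    exact ((tendsto_limUnder_of_abs_le _ fun _ => hF _).const_mul c).limUnder_eq

lemma ultraLim_cons : ∀ {k : ℕ} (U : Fin (k + 1) → Ultrafilter ℕ) (F : (Fin (k + 1) → ℕ) → ℝ),
    ultraLim (k + 1) U F =
      limUnder (U 0 : Filter ℕ) fun c => ultraLim k (fun i => U i.succ) fun n => F (Fin.cons c n)
  | 0, U, F => by
    simp only [ultraLim]
    congr 1
    funext c
    congr 1
    funext i
    fin_cases i
    rfl
  | k + 1, U, F => by
    rw [ultraLim, ultraLim_cons]
    congr 1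
    funext c
    simp only [ultraLim, Fin.succ_castSucc, Fin.succ_last, ← Fin.cons_snoc_eq_snoc_cons]

end UltraLim

section Interleaving

variable {k l m p : ℕ}

lemma exists_eq_succ_of_ne_zero {g : Fin p → Fin (k + 1)} (h : ∀ i, g i ≠ 0) :
    ∃ g' : Fin p → Fin k, ∀ i, g i = (g' i).succ :=
  ⟨fun i => (g i).pred (h i), fun _ => (Fin.succ_pred _ _).symm⟩

lemma StrictMono.of_eq_succ {g : Fin p → Fin (k + 1)} {g' : Fin p → Fin k} (hg : StrictMono g)
    (h : ∀ i, g i = (g' i).succ) : StrictMono g' := fun i j hij => by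
  simpa only [h, Fin.succ_lt_succ_iff] using hg hij

lemma cons_comp_eq_of_eq_succ {α : Type*} {g : Fin p → Fin (k + 1)} {g' : Fin p → Fin k}
    (h : ∀ i, g i = (g' i).succ) (c : α) (n : Fin k → α) :
    (fun i => (Fin.cons c n : Fin (k + 1) → α) (g i)) = fun i => n (g' i) := by
  funext i
  simp only [h, Fin.cons_succ]

lemma cons_comp_eq_cons_of_eq_succ {α : Type*} {g : Fin (p + 1) → Fin (k + 1)}
    {g' : Fin p → Fin k} (h0 : g 0 = 0) (h : ∀ i, g i.succ = (g' i).succ) (c : α)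
    (n : Fin k → α) :
    (fun i => (Fin.cons c n : Fin (k + 1) → α) (g i)) = Fin.cons c fun i => n (g' i) := by
  funext i
  cases i using Fin.cases <;> simp only [h0, h, Fin.cons_zero, Fin.cons_succ]

lemma Monotone.apply_zero_eq_zero {e : Fin (l + 1) → Fin (k + 1)} (he : Monotone e)
    {i : Fin (l + 1)} (hi : e i = 0) : e 0 = 0 :=
  Fin.le_zero_iff.1 (hi ▸ he i.zero_le)

lemma StrictMono.exists_tail {e : Fin (l + 1) → Fin (k + 1)} (he : StrictMono e) (h0 : e 0 = 0) :
    ∃ e' : Fin l → Fin k, StrictMono e' ∧ ∀ i, e i.succ = (e' i).succ := by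
  obtain ⟨e', he'⟩ := exists_eq_succ_of_ne_zero (g := fun i => e i.succ)
    fun i => (h0 ▸ he (Fin.succ_pos i)).ne'
  exact ⟨e', (he.comp (Fin.strictMono_succ)).of_eq_succ he', he'⟩

structure IsInterleaving (e : Fin l → Fin k) (f : Fin m → Fin k) : Prop where
  strictMono_left : StrictMono e
  strictMono_right : StrictMono f
  exists_eq : ∀ q, (∃ i, e i = q) ∨ ∃ j, f j = q
  ne : ∀ i j, e i ≠ f j

lemma IsInterleaving.symm {e : Fin l → Fin k} {f : Fin m → Fin k} (h : IsInterleaving e f) :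
    IsInterleaving f e :=
  ⟨h.strictMono_right, h.strictMono_left, fun q => (h.exists_eq q).symm,
    fun j i hji => h.ne i j hji.symm⟩

lemma IsInterleaving.exists_tail {e : Fin (l + 1) → Fin (k + 1)} {f : Fin m → Fin (k + 1)}
    (h : IsInterleaving e f) (h0 : e 0 = 0) :
    ∃ (e' : Fin l → Fin k) (f' : Fin m → Fin k), IsInterleaving e' f' ∧
      (∀ i, e i.succ = (e' i).succ) ∧ ∀ j, f j = (f' j).succ := by
  obtain ⟨e', he', hee'⟩ := h.strictMono_left.exists_tail h0
  obtain ⟨f', hff'⟩ := exists_eq_succ_of_ne_zero fun j hj => h.ne 0 j (h0.trans hj.symm)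
  refine ⟨e', f', ⟨he', h.strictMono_right.of_eq_succ hff', fun q => ?_, fun i j hij => ?_⟩,
    hee', hff'⟩
  · rcases h.exists_eq q.succ with ⟨i, hi⟩ | ⟨j, hj⟩
    · cases i using Fin.cases with
      | zero => exact absurd (h0.symm.trans hi) (Fin.succ_ne_zero q).symm
      | succ i => exact Or.inl ⟨i, Fin.succ_injective _ ((hee' i).symm.trans hi)⟩
    · exact Or.inr ⟨j, Fin.succ_injective _ ((hff' j).symm.trans hj)⟩
  · exact h.ne i.succ j (by rw [hee', hff', hij])

lemma isInterleaving_orderEmbOfFin (P : Finset (Fin k)) (hP : P.card = l) (hPc : Pᶜ.card = m) :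
    IsInterleaving (P.orderEmbOfFin hP) (Pᶜ.orderEmbOfFin hPc) := by
  refine ⟨(P.orderEmbOfFin hP).strictMono, (Pᶜ.orderEmbOfFin hPc).strictMono, fun q => ?_,
    fun i j hij => ?_⟩
  · by_cases hq : q ∈ P
    · exact Or.inl (by simpa only [← Set.mem_range, Finset.range_orderEmbOfFin, Finset.mem_coe]
        using hq)
    · exact Or.inr (by simpa only [← Set.mem_range, Finset.range_orderEmbOfFin,
        Finset.coe_compl, Set.mem_compl_iff, Finset.mem_coe] using hq)
  · exact Finset.mem_compl.1 (hij ▸ Pᶜ.orderEmbOfFin_mem hPc j) (P.orderEmbOfFin_mem hP i)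

lemma isInterleaving_elim0_id : IsInterleaving (Fin.elim0 : Fin 0 → Fin k) id :=
  ⟨fun i => i.elim0, strictMono_id, fun q => Or.inr ⟨q, rfl⟩, fun i => i.elim0⟩

end Interleaving

lemma ultraLim_comp_strictMono : ∀ {k l : ℕ} (U : Fin k → Ultrafilter ℕ) {e : Fin l → Fin k},
    StrictMono e → ∀ A : (Fin l → ℕ) → ℝ,
    ultraLim k U (fun n => A fun i => n (e i)) = ultraLim l (fun i => U (e i)) A
  | 0, 0, _, _, _, A => congrArg A (funext fun i => i.elim0)
  | 0, _ + 1, _, e, _, _ => (e 0).elim0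
  | k + 1, l, U, e, he, A => by
    rw [ultraLim_cons]
    by_cases h0 : ∀ i, e i ≠ 0
    · obtain ⟨e', hee'⟩ := exists_eq_succ_of_ne_zero h0
      simp only [cons_comp_eq_of_eq_succ hee']
      rw [ultraLim_comp_strictMono _ (he.of_eq_succ hee')]
      simp only [hee', tendsto_const_nhds.limUnder_eq]
    · push Not at h0
      obtain ⟨i₀, hi₀⟩ := h0
      cases l with
      | zero => exact i₀.elim0
      | succ l =>
        have he0 := he.monotone.apply_zero_eq_zero hi₀
        obtain ⟨e', he', hee'⟩ := he.exists_tail he0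
        rw [ultraLim_cons, he0]
        congr 1
        funext c
        simp only [cons_comp_eq_cons_of_eq_succ he0 hee']
        rw [ultraLim_comp_strictMono _ he' fun v => A (Fin.cons c v)]
        simp only [hee']

lemma iterEventually_mono : ∀ {k : ℕ} (U : Fin k → Ultrafilter ℕ) {P Q : (Fin k → ℕ) → Prop},
    (∀ n, P n → Q n) → iterEventually k U P → iterEventually k U Q
  | 0, _, _, _, h, hP => h _ hP
  | k + 1, U, P, Q, h, hP =>
    iterEventually_mono (k := k) _ (P := fun n => ∀ᶠ a in U (Fin.last k), P (Fin.snoc n a))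
      (Q := fun n => ∀ᶠ a in U (Fin.last k), Q (Fin.snoc n a)) (fun _ hn => hn.mono fun _ => h _) hP

lemma iterEventually_cons : ∀ {k : ℕ} (U : Fin (k + 1) → Ultrafilter ℕ)
    {P : (Fin (k + 1) → ℕ) → Prop}, iterEventually (k + 1) U P →
    ∀ᶠ c in U 0, iterEventually k (fun i => U i.succ) fun n => P (Fin.cons c n)
  | 0, _, P, h => h.mono fun c hc => by
    show P _
    convert hc using 2
    funext i
    fin_cases i
    rfl
  | k + 1, U, P, h => (iterEventually_cons (k := k) (fun i => U i.castSucc)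
      (P := fun n => ∀ᶠ a in U (Fin.last (k + 1)), P (Fin.snoc n a)) h).mono fun c hc =>
    iterEventually_mono (k := k) _ (fun n hn => by
      simpa only [Fin.succ_last, Fin.cons_snoc_eq_snoc_cons] using hn) hc

section Trees

variable {X : Type*} [NormedAddCommGroup X] [NormedSpace ℝ X] {l : ℕ}

noncomputable def branchSum (a : Fin l → ℝ) (s : TreeU X l) (v : Fin l → ℕ) : X :=
  ∑ i, a i • s i fun j => v (Fin.castLE i.isLt j)

lemma treeNorm_eq_ultraLim (V : Fin l → Ultrafilter ℕ) (s : TreeU X l) (x : X) (a : Fin l → ℝ) :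
    treeNorm V s x a = ultraLim l V fun v => ‖x + branchSum a s v‖ := rfl

def treeShift (t : TreeU X (l + 1)) (c : ℕ) : TreeU X l :=
  fun i v => t i.succ (Fin.cons c v)

lemma norm_branchSum_le {s : TreeU X l} (hs : ∀ i v, ‖s i v‖ ≤ 1) (a : Fin l → ℝ)
    (v : Fin l → ℕ) : ‖branchSum a s v‖ ≤ ∑ i, |a i| :=
  (norm_sum_le _ _).trans <| Finset.sum_le_sum fun i _ => by
    rw [norm_smul, Real.norm_eq_abs]
    exact mul_le_of_le_one_right (abs_nonneg _) (hs i _)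

lemma branchSum_cons (a : Fin (l + 1) → ℝ) (s : TreeU X (l + 1)) (c : ℕ) (v : Fin l → ℕ) :
    branchSum a s (Fin.cons c v) =
      a 0 • s 0 (fun _ => c) + branchSum (fun i => a i.succ) (treeShift s c) v := by
  rw [branchSum, Fin.sum_univ_succ]
  congr 1
  · congr 2
    funext j
    fin_cases j
    rfl
  · refine Finset.sum_congr rfl fun i _ => ?_
    congr 2
    funext j
    cases j using Fin.cases <;> rfl

lemma WeaklyNullU.tendsto_root {V : Fin (l + 1) → Ultrafilter ℕ} {t : TreeU X (l + 1)}
    (h : WeaklyNullU V t) (φ : X →L[ℝ] ℝ) :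
    Tendsto (fun c => φ (t 0 fun _ => c)) (V 0) (𝓝 0) := by
  convert h 0 φ using 4
  funext i
  fin_cases i
  rfl

lemma WeaklyNullU.eventually_treeShift {V : Fin (l + 1) → Ultrafilter ℕ} {t : TreeU X (l + 1)}
    (h : WeaklyNullU V t) : ∀ᶠ c in V 0, WeaklyNullU (fun i => V i.succ) (treeShift t c) := by
  refine eventually_all.2 fun i => (iterEventually_cons _ (h i.succ)).mono fun c hc => ?_
  refine iterEventually_mono _ (fun pre hpre φ => ?_) hc
  simpa only [treeShift, Fin.cons_snoc_eq_snoc_cons] using hpre φ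

end Trees

section NormBounds

variable {E : Type*} [SeminormedAddCommGroup E] {R R' : ℝ}

lemma abs_norm_add_le {u : E} (hu : ‖u‖ ≤ R) (x : E) : |‖x + u‖| ≤ ‖x‖ + R :=
  (abs_norm _).trans_le <| (norm_add_le _ _).trans (add_le_add_right hu _)

lemma abs_norm_add_add_le {u v : E} (hu : ‖u‖ ≤ R) (hv : ‖v‖ ≤ R') (x : E) :
    |‖x + u + v‖| ≤ ‖x‖ + R + R' :=
  (abs_norm _).trans_le <| norm_add₃_le.trans (add_le_add (add_le_add_right hu _) hv)

lemma lipschitzWith_ultraLim_norm_add {k : ℕ} (U : Fin k → Ultrafilter ℕ)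
    {w : (Fin k → ℕ) → E} (hw : ∀ n, ‖w n‖ ≤ R) :
    LipschitzWith 1 fun y => ultraLim k U fun n => ‖y + w n‖ := by
  refine LipschitzWith.of_le_add fun y z => ?_
  rw [dist_eq_norm, ← ultraLim_const U ‖y - z‖,
    ← ultraLim_add U (fun n => abs_norm_add_le (hw n) z) fun _ => (abs_norm _).le]
  refine ultraLim_mono U (fun n => abs_norm_add_le (hw n) y)
    (fun n => (abs_add_le _ _).trans (add_le_add (abs_norm_add_le (hw n) z) (abs_norm _).le))
    fun n => ?_
  calc ‖y + w n‖ = ‖(z + w n) + (y - z)‖ := by abel_nf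
    _ ≤ _ := norm_add_le _ _

end NormBounds

section WeakLowerSemicontinuity

variable {X : Type*} [NormedAddCommGroup X] [NormedSpace ℝ X]

/-- A sublevel set of `N` is closed and convex, hence separated by a functional from any point
outside it. -/
lemma ConvexOn.le_of_tendsto_of_forall_tendsto_dual {N : X → ℝ} (hN : ConvexOn ℝ Set.univ N)
    (hNc : Continuous N) {α : Type*} {W : Filter α} [W.NeBot] {y : α → X} {x : X}
    (hy : ∀ φ : X →L[ℝ] ℝ, Tendsto (fun c => φ (y c)) W (𝓝 (φ x))) {L : ℝ}
    (hL : Tendsto (fun c => N (y c)) W (𝓝 L)) : N x ≤ L := by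
  by_contra! hlt
  obtain ⟨L', hLL', hL'x⟩ := exists_between hlt
  obtain ⟨φ, u, hφ, hux⟩ := geometric_hahn_banach_closed_point (hN.convex_le L')
    (isClosed_univ.inter (isClosed_le hNc continuous_const)) fun hx => hL'x.not_ge hx.2
  have hbelow : ∀ᶠ c in W, φ (y c) < u :=
    (hL.eventually (gt_mem_nhds hLL')).mono fun c hc => hφ _ ⟨Set.mem_univ _, hc.le⟩
  obtain ⟨c, hc₁, hc₂⟩ := (hbelow.and ((hy φ).eventually (lt_mem_nhds hux))).exists
  exact hc₁.not_gt hc₂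

lemma convexOn_ultraLim_norm_add {k : ℕ} (U : Fin k → Ultrafilter ℕ) {w : (Fin k → ℕ) → X}
    {R : ℝ} (hw : ∀ n, ‖w n‖ ≤ R) :
    ConvexOn ℝ Set.univ fun y => ultraLim k U fun n => ‖y + w n‖ := by
  refine ⟨convex_univ, fun y _ z _ a b ha hb hab => ?_⟩
  have hbd : ∀ (c : ℝ) (y : X) n, |c * ‖y + w n‖| ≤ |c| * (‖y‖ + R) := fun c y n =>
    (abs_mul _ _).trans_le (mul_le_mul_of_nonneg_left (abs_norm_add_le (hw n) y) (abs_nonneg c))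
  simp only [smul_eq_mul]
  rw [← ultraLim_const_mul U (fun n => abs_norm_add_le (hw n) y),
    ← ultraLim_const_mul U (fun n => abs_norm_add_le (hw n) z),
    ← ultraLim_add U (hbd a y) (hbd b z)]
  refine ultraLim_mono U (fun n => abs_norm_add_le (hw n) _)
    (fun n => (abs_add_le _ _).trans (add_le_add (hbd a y n) (hbd b z n))) fun n => ?_
  calc ‖a • y + b • z + w n‖ = ‖a • (y + w n) + b • (z + w n)‖ := by
        rw [smul_add, smul_add, add_add_add_comm, ← add_smul, hab, one_smul]
    _ ≤ a * ‖y + w n‖ + b * ‖z + w n‖ := by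
        refine (norm_add_le _ _).trans (add_le_add ?_ ?_) <;> rw [norm_smul_of_nonneg ‹_›]

end WeakLowerSemicontinuity

section TreeNorm

variable {X : Type*} [NormedAddCommGroup X] [NormedSpace ℝ X]

lemma treeNorm_le_limUnder_add {l : ℕ} {V : Fin l → Ultrafilter ℕ} {s : TreeU X l}
    (hs : ∀ i v, ‖s i v‖ ≤ 1) (x : X) (a : Fin l → ℝ) (W : Ultrafilter ℕ) {y : ℕ → X} {R : ℝ}
    (hyR : ∀ c, ‖y c‖ ≤ R) (hy : ∀ φ : X →L[ℝ] ℝ, Tendsto (fun c => φ (y c)) W (𝓝 0)) :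
    treeNorm V s x a ≤ limUnder (W : Filter ℕ) fun c => treeNorm V s (x + y c) a :=
  (convexOn_ultraLim_norm_add V (norm_branchSum_le hs a)).le_of_tendsto_of_forall_tendsto_dual
    (lipschitzWith_ultraLim_norm_add V (norm_branchSum_le hs a)).continuous
    (fun φ => by simpa using (hy φ).const_add (φ x))
    (tendsto_limUnder_of_abs_le W fun c => abs_ultraLim_le V fun v =>
      abs_norm_add_add_le (hyR c) (norm_branchSum_le hs a v) x)

def InterleavingDominates (X : Type*) [NormedAddCommGroup X] [NormedSpace ℝ X] (k : ℕ) : Prop :=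
  ∀ ⦃l m : ℕ⦄ ⦃U : Fin k → Ultrafilter ℕ⦄ ⦃e : Fin l → Fin k⦄ ⦃f : Fin m → Fin k⦄,
    IsInterleaving e f → ∀ ⦃s : TreeU X l⦄ ⦃t : TreeU X m⦄, (∀ i v, ‖s i v‖ ≤ 1) →
    (∀ i v, ‖t i v‖ ≤ 1) → WeaklyNullU (fun j => U (f j)) t →
    ∀ (x : X) (a : Fin l → ℝ) (b : Fin m → ℝ),
    treeNorm (fun i => U (e i)) s x a ≤ ultraLim k U fun n =>
      ‖x + branchSum a s (fun i => n (e i)) + branchSum b t (fun j => n (f j))‖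

lemma interleavingDominates_zero : InterleavingDominates X 0 := by
  intro l m U e f h s t hs ht hwt x a b
  cases l with
  | succ => exact (e 0).elim0
  | zero => cases m with
    | succ => exact (f 0).elim0
    | zero => simp [treeNorm, ultraLim, branchSum]

variable {k l m : ℕ} {U : Fin (k + 1) → Ultrafilter ℕ}

lemma abs_ultraLim_cons_le {s : TreeU X l} {t : TreeU X m} (hs : ∀ i v, ‖s i v‖ ≤ 1)
    (ht : ∀ i v, ‖t i v‖ ≤ 1) (e : Fin l → Fin (k + 1)) (f : Fin m → Fin (k + 1)) (x : X)
    (a : Fin l → ℝ) (b : Fin m → ℝ) (c : ℕ) :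
    |ultraLim k (fun i => U i.succ) fun n =>
        ‖x + branchSum a s (fun i => (Fin.cons c n : Fin (k + 1) → ℕ) (e i)) +
          branchSum b t (fun j => (Fin.cons c n : Fin (k + 1) → ℕ) (f j))‖| ≤
      ‖x‖ + ∑ i, |a i| + ∑ j, |b j| :=
  abs_ultraLim_le _ fun _ => abs_norm_add_add_le (norm_branchSum_le hs a _)
    (norm_branchSum_le ht b _) x

lemma InterleavingDominates.succ_of_left (ih : InterleavingDominates X k)
    {e : Fin (l + 1) → Fin (k + 1)} {f : Fin m → Fin (k + 1)} (h : IsInterleaving e f)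
    (he0 : e 0 = 0) {s : TreeU X (l + 1)} {t : TreeU X m} (hs : ∀ i v, ‖s i v‖ ≤ 1)
    (ht : ∀ i v, ‖t i v‖ ≤ 1) (hwt : WeaklyNullU (fun j => U (f j)) t) (x : X)
    (a : Fin (l + 1) → ℝ) (b : Fin m → ℝ) :
    treeNorm (fun i => U (e i)) s x a ≤ ultraLim (k + 1) U fun n =>
      ‖x + branchSum a s (fun i => n (e i)) + branchSum b t (fun j => n (f j))‖ := by
  obtain ⟨e', f', h', hee', hff'⟩ := h.exists_tail he0
  rw [treeNorm_eq_ultraLim, ultraLim_cons, ultraLim_cons, he0]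
  refine limUnder_mono _ (fun c => abs_ultraLim_le _ fun v =>
    abs_norm_add_le (norm_branchSum_le hs a _) x) (abs_ultraLim_cons_le hs ht e f x a b)
    (.of_forall fun c => ?_)
  simp only [cons_comp_eq_cons_of_eq_succ he0 hee', cons_comp_eq_of_eq_succ hff', branchSum_cons]
  simp only [hee']
  simpa only [treeNorm_eq_ultraLim, add_assoc] using
    ih (U := fun i => U i.succ) h' (s := treeShift s c) (fun i v => hs i.succ _) ht
      (by simpa only [hff'] using hwt) (x + a 0 • s 0 fun _ => c) (fun i => a i.succ) b

lemma InterleavingDominates.succ_of_right (ih : InterleavingDominates X k)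
    {e : Fin l → Fin (k + 1)} {f : Fin (m + 1) → Fin (k + 1)} (h : IsInterleaving e f)
    (hf0 : f 0 = 0) {s : TreeU X l} {t : TreeU X (m + 1)} (hs : ∀ i v, ‖s i v‖ ≤ 1)
    (ht : ∀ i v, ‖t i v‖ ≤ 1) (hwt : WeaklyNullU (fun j => U (f j)) t) (x : X)
    (a : Fin l → ℝ) (b : Fin (m + 1) → ℝ) :
    treeNorm (fun i => U (e i)) s x a ≤ ultraLim (k + 1) U fun n =>
      ‖x + branchSum a s (fun i => n (e i)) + branchSum b t (fun j => n (f j))‖ := by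
  obtain ⟨f', e', h', hff', hee'⟩ := h.symm.exists_tail hf0
  have hroot := hwt.tendsto_root
  have hshift := hwt.eventually_treeShift
  simp only [hf0] at hroot hshift
  have hroot_le : ∀ c, ‖b 0 • t 0 fun _ => c‖ ≤ ‖b 0‖ := fun c =>
    (norm_smul_le _ _).trans (mul_le_of_le_one_right (norm_nonneg _) (ht _ _))
  refine (treeNorm_le_limUnder_add hs x a (U 0) hroot_le
    fun φ => by simpa using (hroot φ).const_mul (b 0)).trans ?_
  rw [ultraLim_cons]
  refine limUnder_mono _ (fun c => abs_ultraLim_le _ fun v =>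
    abs_norm_add_add_le (hroot_le c) (norm_branchSum_le hs a v) x)
    (abs_ultraLim_cons_le hs ht e f x a b) (hshift.mono fun c hc => ?_)
  simp only [cons_comp_eq_of_eq_succ hee', cons_comp_eq_cons_of_eq_succ hf0 hff', branchSum_cons]
  simp only [hee']
  convert ih (U := fun i => U i.succ) h'.symm hs (t := treeShift t c) (fun i v => ht i.succ _)
    (by simpa only [hff'] using hc) (x + b 0 • t 0 fun _ => c) a (fun j => b j.succ) using 3 with n
  congr 1
  abel

theorem interleavingDominates : ∀ k, InterleavingDominates X k
  | 0 => interleavingDominates_zero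
  | k + 1 => by
    intro l m U e f h s t hs ht hwt x a b
    rcases h.exists_eq 0 with ⟨i₀, hi₀⟩ | ⟨j₀, hj₀⟩
    · cases l with
      | zero => exact i₀.elim0
      | succ l =>
        exact (interleavingDominates k).succ_of_left h
          (h.strictMono_left.monotone.apply_zero_eq_zero hi₀) hs ht hwt x a b
    · cases m with
      | zero => exact j₀.elim0
      | succ m =>
        exact (interleavingDominates k).succ_of_right h
          (h.strictMono_right.monotone.apply_zero_eq_zero hj₀) hs ht hwt x a b

end TreeNorm

section CutEstimate

variable {X : Type*} [NormedAddCommGroup X] [NormedSpace ℝ X] {k l m : ℕ}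

lemma treeNorm_zero (V : Fin l → Ultrafilter ℕ) (s : TreeU X l) (a : Fin l → ℝ) :
    treeNorm V s 0 a = ultraLim l V fun v => ‖branchSum a s v‖ := by
  simp only [treeNorm_eq_ultraLim, zero_add]

lemma treeNorm_le_treeNorm_add_norm {V : Fin l → Ultrafilter ℕ} {s : TreeU X l}
    (hs : ∀ i v, ‖s i v‖ ≤ 1) (a : Fin l → ℝ) (y z : X) :
    treeNorm V s y a ≤ treeNorm V s z a + ‖y - z‖ := by
  have := (lipschitzWith_ultraLim_norm_add V (norm_branchSum_le hs a)).dist_le_mul y z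
  rw [NNReal.coe_one, one_mul, Real.dist_eq, dist_eq_norm] at this
  exact sub_le_iff_le_add'.1 ((le_abs_self _).trans this)

lemma norm_le_treeNorm {V : Fin l → Ultrafilter ℕ} {s : TreeU X l} (hs : ∀ i v, ‖s i v‖ ≤ 1)
    (hws : WeaklyNullU V s) (x : X) (a : Fin l → ℝ) : ‖x‖ ≤ treeNorm V s x a := by
  simpa [treeNorm, ultraLim, branchSum] using interleavingDominates l (U := V)
    isInterleaving_elim0_id (s := fun i => i.elim0) (fun i => i.elim0) hs hws x
    (fun i => i.elim0) a

variable {U : Fin k → Ultrafilter ℕ} {e : Fin l → Fin k} {f : Fin m → Fin k}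
  {s : TreeU X l} {t : TreeU X m}

lemma ultraLim_norm_add_branchSum_le (he : StrictMono e) (hf : StrictMono f)
    (hs : ∀ i v, ‖s i v‖ ≤ 1) (ht : ∀ i v, ‖t i v‖ ≤ 1) (x : X) (a : Fin l → ℝ) (b : Fin m → ℝ) :
    (ultraLim k U fun n => ‖x + branchSum a s (fun i => n (e i)) + branchSum b t fun j => n (f j)‖)
      ≤ ‖x‖ + treeNorm (fun i => U (e i)) s 0 a + treeNorm (fun j => U (f j)) t 0 b := by
  have hbs : ∀ n : Fin k → ℕ, |‖branchSum a s fun i => n (e i)‖| ≤ ∑ i, |a i| :=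
    fun n => (abs_norm _).trans_le (norm_branchSum_le hs a _)
  have hbt : ∀ n : Fin k → ℕ, |‖branchSum b t fun j => n (f j)‖| ≤ ∑ j, |b j| :=
    fun n => (abs_norm _).trans_le (norm_branchSum_le ht b _)
  rw [treeNorm_zero, treeNorm_zero, ← ultraLim_comp_strictMono U he,
    ← ultraLim_comp_strictMono U hf, ← ultraLim_const U ‖x‖,
    ← ultraLim_add U (fun _ => (abs_norm x).le) hbs,
    ← ultraLim_add U (fun n => (abs_add_le _ _).trans (add_le_add (abs_norm x).le (hbs n))) hbt]
  exact ultraLim_mono U (fun n => abs_norm_add_add_le (norm_branchSum_le hs a _)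
    (norm_branchSum_le ht b _) x) (R' := ‖x‖ + ∑ i, |a i| + ∑ j, |b j|)
    (fun n => (abs_add_le _ _).trans (add_le_add ((abs_add_le _ _).trans
      (add_le_add (abs_norm x).le (hbs n))) (hbt n)))
    fun n => norm_add₃_le

lemma norm_add_treeNorm_add_treeNorm_le (h : IsInterleaving e f) (hs : ∀ i v, ‖s i v‖ ≤ 1)
    (ht : ∀ i v, ‖t i v‖ ≤ 1) (hws : WeaklyNullU (fun i => U (e i)) s)
    (hwt : WeaklyNullU (fun j => U (f j)) t) (x : X) (a : Fin l → ℝ) (b : Fin m → ℝ) :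
    ‖x‖ + treeNorm (fun i => U (e i)) s 0 a + treeNorm (fun j => U (f j)) t 0 b ≤
      5 * ultraLim k U fun n =>
        ‖x + branchSum a s (fun i => n (e i)) + branchSum b t fun j => n (f j)‖ := by
  have hLs := interleavingDominates k h hs ht hwt x a b
  have hLt : treeNorm (fun j => U (f j)) t x b ≤ ultraLim k U fun n =>
      ‖x + branchSum a s (fun i => n (e i)) + branchSum b t fun j => n (f j)‖ :=
    (interleavingDominates k h.symm ht hs hws x b a).trans_eq <| by
      simp only [add_right_comm]
  have hx := norm_le_treeNorm hs hws x a
  have hNs := treeNorm_le_treeNorm_add_norm hs a 0 x (V := fun i => U (e i))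
  have hNt := treeNorm_le_treeNorm_add_norm ht b 0 x (V := fun j => U (f j))
  rw [zero_sub, norm_neg] at hNs hNt
  linarith

end CutEstimate

lemma sum_smul_treeR_eq_root_add_branchSum {X : Type*} [NormedAddCommGroup X] [NormedSpace ℝ X]
    {l : ℕ} (a : Fin (l + 1) → ℝ) (s : TreeR X l) (v : Fin l → ℕ) :
    ∑ i : Fin (l + 1), a i • s i (fun j => v (Fin.castLE (Nat.lt_succ_iff.mp i.isLt) j)) =
      a 0 • s 0 (fun j => j.elim0) + branchSum (fun i => a i.succ) (unroot s) v := by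
  rw [Fin.sum_univ_succ]
  congr 3
  funext j
  exact j.elim0

theorem stmt19_general (X : Type*) [NormedAddCommGroup X] [NormedSpace ℝ X]
    (l m : ℕ) (P : Finset (Fin (l + m))) (hP : P.card = l)
    (U : Fin (l + m) → Ultrafilter ℕ)
    (s : TreeR X l) (t : TreeR X m) (hs : NormalizedR s) (ht : NormalizedR t)
    (hws : WeaklyNullR (fun i => U (P.orderEmbOfFin hP i)) s)
    (hwt : WeaklyNullR (fun j => U (Pᶜ.orderEmbOfFin (compl_card P hP) j)) t)
    (a : Fin (l + 1) → ℝ) (b : Fin (m + 1) → ℝ)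
    (F : (Fin l → ℕ) → X)
    (hF : F = fun v => ∑ i : Fin (l + 1),
      a i • s i (fun j => v (Fin.castLE (Nat.lt_succ_iff.mp i.isLt) j)))
    (G : (Fin m → ℕ) → X)
    (hG : G = fun v => ∑ i : Fin (m + 1),
      b i • t i (fun j => v (Fin.castLE (Nat.lt_succ_iff.mp i.isLt) j)))
    (r : X)
    (hr : r = a ⟨0, Nat.succ_pos l⟩ • s ⟨0, Nat.succ_pos l⟩ (fun j => j.elim0) +
        b ⟨0, Nat.succ_pos m⟩ • t ⟨0, Nat.succ_pos m⟩ (fun j => j.elim0)) :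
    ‖r‖ + treeNorm (fun i => U (P.orderEmbOfFin hP i)) (unroot s) 0 (fun i => a i.succ) +
        treeNorm (fun j => U (Pᶜ.orderEmbOfFin (compl_card P hP) j)) (unroot t) 0
          (fun j => b j.succ) ≤
      5 * ultraLim (l + m) U
        (fun n => ‖F (subTuple n P hP) + G (subTuple n Pᶜ (compl_card P hP))‖) ∧
    ultraLim (l + m) U
        (fun n => ‖F (subTuple n P hP) + G (subTuple n Pᶜ (compl_card P hP))‖) ≤
      ‖r‖ + treeNorm (fun i => U (P.orderEmbOfFin hP i)) (unroot s) 0 (fun i => a i.succ) +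
        treeNorm (fun j => U (Pᶜ.orderEmbOfFin (compl_card P hP) j)) (unroot t) 0
          (fun j => b j.succ) := by
  have hsplit : ∀ n : Fin (l + m) → ℕ,
      F (subTuple n P hP) + G (subTuple n Pᶜ (compl_card P hP)) =
        r + branchSum (fun i => a i.succ) (unroot s) (fun i => n (P.orderEmbOfFin hP i)) +
          branchSum (fun j => b j.succ) (unroot t)
            (fun j => n (Pᶜ.orderEmbOfFin (compl_card P hP) j)) := fun n => by
    have hr₀ : r = a 0 • s 0 (fun j => j.elim0) + b 0 • t 0 (fun j => j.elim0) := hr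
    simp only [hF, hG, hr₀, sum_smul_treeR_eq_root_add_branchSum]
    unfold subTuple
    abel
  have hs' : ∀ i v, ‖unroot s i v‖ ≤ 1 := fun i v => (hs i.succ v).le
  have ht' : ∀ i v, ‖unroot t i v‖ ≤ 1 := fun i v => (ht i.succ v).le
  simp only [hsplit]
  exact ⟨norm_add_treeNorm_add_treeNorm_le (isInterleaving_orderEmbOfFin P hP _) hs' ht' hws hwt
      r _ _,
    ultraLim_norm_add_branchSum_le (P.orderEmbOfFin hP).strictMono
      (Pᶜ.orderEmbOfFin _).strictMono hs' ht' r _ _⟩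

/-- The key estimate for cut stability of reflexive spaces: for branch functions `f, g`
built from weakly null normalized rooted trees `s, t` with nonnegative coefficients,
`‖a₀s(∅) + b₀t(∅)‖ + N_s^{Ū_P}(Σ aᵢeᵢ) + N_t^{Ū_{P^c}}(Σ bⱼeⱼ)` is between
`lim_{n̄,Ū} ‖f(n_i : i ∈ P) + g(n_i : i ∈ P^c)‖` and `5` times it. -/
theorem stmt19 (X : Type*) [NormedAddCommGroup X] [NormedSpace ℝ X] [CompleteSpace X]
    (hrefl : Function.Surjective (NormedSpace.inclusionInDoubleDual ℝ X))
    (l m : ℕ) (P : Finset (Fin (l + m))) (hP : P.card = l)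
    (U : Fin (l + m) → Ultrafilter ℕ) (hU : ∀ i, FreeUF (U i))
    (s : TreeR X l) (t : TreeR X m) (hs : NormalizedR s) (ht : NormalizedR t)
    (hws : WeaklyNullR (fun i => U (P.orderEmbOfFin hP i)) s)
    (hwt : WeaklyNullR (fun j => U (Pᶜ.orderEmbOfFin (compl_card P hP) j)) t)
    (a : Fin (l + 1) → ℝ) (b : Fin (m + 1) → ℝ) (ha : ∀ i, 0 ≤ a i) (hb : ∀ j, 0 ≤ b j)
    (F : (Fin l → ℕ) → X)
    (hF : F = fun v => ∑ i : Fin (l + 1),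
      a i • s i (fun j => v (Fin.castLE (Nat.lt_succ_iff.mp i.isLt) j)))
    (G : (Fin m → ℕ) → X)
    (hG : G = fun v => ∑ i : Fin (m + 1),
      b i • t i (fun j => v (Fin.castLE (Nat.lt_succ_iff.mp i.isLt) j)))
    (r : X)
    (hr : r = a ⟨0, Nat.succ_pos l⟩ • s ⟨0, Nat.succ_pos l⟩ (fun j => j.elim0) +
        b ⟨0, Nat.succ_pos m⟩ • t ⟨0, Nat.succ_pos m⟩ (fun j => j.elim0)) :
    ‖r‖ + treeNorm (fun i => U (P.orderEmbOfFin hP i)) (unroot s) 0 (fun i => a i.succ) +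
        treeNorm (fun j => U (Pᶜ.orderEmbOfFin (compl_card P hP) j)) (unroot t) 0
          (fun j => b j.succ) ≤
      5 * ultraLim (l + m) U
        (fun n => ‖F (subTuple n P hP) + G (subTuple n Pᶜ (compl_card P hP))‖) ∧
    ultraLim (l + m) U
        (fun n => ‖F (subTuple n P hP) + G (subTuple n Pᶜ (compl_card P hP))‖) ≤
      ‖r‖ + treeNorm (fun i => U (P.orderEmbOfFin hP i)) (unroot s) 0 (fun i => a i.succ) +
        treeNorm (fun j => U (Pᶜ.orderEmbOfFin (compl_card P hP) j)) (unroot t) 0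
          (fun j => b j.succ) :=
  stmt19_general X l m P hP U s t hs ht hws hwt a b F hF G hG r hr
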